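/- arXiv:1402.0221 — 8 statements merged into one kernel-verified Lean document; each statement's English description precedes it below -/
import Mathlib

section
/- Let n = p^μ be a prime power with μ ≥ 2 and let α = n/p. If v is an integer with 1 ≤ v ≤ n−1 and gcd(v, p) = 1, then there exists an integer t with 0 ≤ t ≤ p−1 such that y = 1 + tα is a unit modulo n and the least positive residue of v·y modulo n is strictly less than n/p. -/
/-!
Write `v = a α + b` with `0 ≤ b < α`; `b ≠ 0` because `p ∣ α` but `p ∤ v`. As `v` is invertible
modulo `p`, some `t < p` makes `p ∣ a + t v`, and then `v (1 + t α) = b + (a + t v) α ≡ b`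
modulo `p α = n`, so the residue is `b < α = n / p`. Every `1 + t α` is `≡ 1 (mod p)`, hence a unit.
-/

/-- `lpr n x` is the least positive residue of `x` modulo `n` (in `[1, n]`). -/
def lpr (n x : ℕ) : ℕ := if x % n = 0 then n else x % n

lemma lpr_of_mod_ne_zero {n x : ℕ} (h : x % n ≠ 0) : lpr n x = x % n := if_neg h

lemma Nat.coprime_one_add_pow_of_dvd {p m : ℕ} (h : p ∣ m) (μ : ℕ) :
    Nat.Coprime (1 + m) (p ^ μ) := by
  obtain ⟨c, rfl⟩ := h
  refine Nat.Coprime.pow_right μ ?_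
  simp

lemma Nat.exists_lt_dvd_add_mul {m v : ℕ} [NeZero m] (hv : v.Coprime m) (a : ℕ) :
    ∃ t < m, m ∣ a + t * v := by
  refine ⟨(-(a : ZMod m) * (v : ZMod m)⁻¹).val, ZMod.val_lt _, ?_⟩
  rw [← ZMod.natCast_eq_zero_iff]
  push_cast
  rw [ZMod.natCast_val, ZMod.cast_id, mul_assoc, mul_comm _ (v : ZMod m),
    ZMod.coe_mul_inv_eq_one v hv]
  ring

lemma Nat.mul_one_add_mul_mod_mul {m α v t : ℕ} (h : m ∣ v / α + t * v) :
    v * (1 + t * α) % (α * m) = v % α := by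
  rcases Nat.eq_zero_or_pos α with rfl | hα
  · simp
  have hsplit : v * (1 + t * α) = v % α + (v / α + t * v) * α := by
    linear_combination (Nat.mod_add_div v α).symm
  rw [Nat.mod_mul, hsplit, Nat.add_mul_mod_self_right, Nat.mod_mod,
    Nat.add_mul_div_right _ _ hα, Nat.div_eq_of_lt (Nat.mod_lt v hα), zero_add,
    Nat.mod_eq_zero_of_dvd h, mul_zero, add_zero]

theorem stmt_0_general (p μ n α : ℕ) (hp : p.Prime) (hμ : 2 ≤ μ) (hn : n = p ^ μ)
    (hα : α = n / p) (v : ℕ)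
    (hvp : Nat.gcd v p = 1) :
    ∃ t : ℕ, t ≤ p - 1 ∧ Nat.gcd (1 + t * α) n = 1 ∧
      lpr n (v * (1 + t * α)) < n / p := by
  have : NeZero p := ⟨hp.ne_zero⟩
  have hnα : n = p ^ (μ - 1) * p := by rw [hn, ← pow_succ, Nat.sub_add_cancel (by omega)]
  have hα' : α = p ^ (μ - 1) := by rw [hα, hnα, Nat.mul_div_cancel _ hp.pos]
  rw [← hα'] at hnα
  have hpα : p ∣ α := hα' ▸ dvd_pow_self p (by omega)
  have hpv : ¬ p ∣ v := hp.coprime_iff_not_dvd.mp (Nat.coprime_comm.mp hvp)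
  obtain ⟨t, htp, hdvd⟩ := Nat.exists_lt_dvd_add_mul hvp (v / α)
  have hmod : v * (1 + t * α) % n = v % α := hnα ▸ Nat.mul_one_add_mul_mod_mul hdvd
  have hvα : v % α ≠ 0 := fun h => hpv (hpα.trans (Nat.dvd_of_mod_eq_zero h))
  refine ⟨t, by omega, hn ▸ Nat.coprime_one_add_pow_of_dvd (hpα.mul_left t) μ, ?_⟩
  rw [lpr_of_mod_ne_zero (hmod ▸ hvα), hmod, hnα, Nat.mul_div_cancel _ hp.pos]
  exact Nat.mod_lt v (hα' ▸ pow_pos hp.pos _)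

theorem stmt_0 (p μ n α : ℕ) (hp : p.Prime) (hμ : 2 ≤ μ) (hn : n = p ^ μ)
    (hα : α = n / p) (v : ℕ) (hv1 : 1 ≤ v) (hv2 : v ≤ n - 1)
    (hvp : Nat.gcd v p = 1) :
    ∃ t : ℕ, t ≤ p - 1 ∧ Nat.gcd (1 + t * α) n = 1 ∧
      lpr n (v * (1 + t * α)) < n / p :=
  stmt_0_general p μ n α hp hμ hn hα v hvp
end

section
/- Let n = p^μ with p ≥ 5 prime and μ ≥ 2, and let x1,...,x5 ∈ [1, n−1] with x1 + ... + x5 ≡ 0 (mod n), such that no proper nonempty subset of {x1,...,x5} has sum divisible by n, and gcd(n, x1, x2, x3, x4, x5) = 1. If at least three of the x_i are equal, then there exists a unit m modulo n with |m·x1|_n + |m·x2|_n + |m·x3|_n + |m·x4|_n + |m·x5|_n = n. -/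
open Finset

theorem lpr_modEq (n x : ℕ) : lpr n x ≡ x [MOD n] := by
  unfold lpr
  split_ifs with h
  · simp [Nat.ModEq, h]
  · exact Nat.mod_modEq x n

theorem lpr_pos {n : ℕ} (hn : 0 < n) (x : ℕ) : 0 < lpr n x := by
  unfold lpr
  split_ifs <;> omega

theorem lpr_le {n : ℕ} (hn : 0 < n) (x : ℕ) : lpr n x ≤ n := by
  unfold lpr
  split_ifs
  · exact le_rfl
  · exact (Nat.mod_lt x hn).le

theorem lpr_eq_of_modEq {n x r : ℕ} (hr : 0 < r) (hrn : r < n) (h : x ≡ r [MOD n]) :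
    lpr n x = r := by
  have hx : x % n = r := Eq.trans h (Nat.mod_eq_of_lt hrn)
  rw [lpr, hx, if_neg hr.ne']

theorem sum_lpr_eq_of_lt {ι : Type*} {s : Finset ι} {x : ι → ℕ} {n : ℕ} (m : ℕ) (hn : 0 < n)
    (hs : s.Nonempty) (hdvd : n ∣ ∑ i ∈ s, x i) (hlt : ∑ i ∈ s, lpr n (m * x i) < 2 * n) :
    ∑ i ∈ s, lpr n (m * x i) = n := by
  refine Nat.eq_of_dvd_of_lt_two_mul (sum_pos (fun i _ ↦ lpr_pos hn _) hs).ne' ?_ hlt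
  apply Nat.modEq_zero_iff_dvd.mp
  calc ∑ i ∈ s, lpr n (m * x i) ≡ ∑ i ∈ s, m * x i [MOD n] := Nat.ModEq.sum fun i _ ↦ lpr_modEq ..
    _ = m * ∑ i ∈ s, x i := (mul_sum ..).symm
    _ ≡ m * 0 [MOD n] := (Nat.modEq_zero_iff_dvd.mpr hdvd).mul_left m

theorem Nat.Coprime.of_mul_modEq {m b w n : ℕ} (h : b * m ≡ w [MOD n]) (hw : w.Coprime n) :
    m.Coprime n :=
  Nat.Coprime.coprime_mul_left (h.gcd_eq.trans hw)

theorem exists_coprime_mul_lpr_lt_of_coprime {n a b k : ℕ} (hn : 0 < n) (ha : a.Coprime n)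
    (hb : ∀ j ≤ k, ¬ n ∣ j * a + b) :
    ∃ m, m.Coprime n ∧ k * lpr n (m * a) + lpr n (m * b) < n := by
  have hn1 : 1 < n := by
    by_contra h
    exact hb 0 k.zero_le (by rw [show n = 1 by omega]; exact one_dvd _)
  obtain ⟨m, -, hm⟩ := Nat.exists_mul_mod_eq_of_coprime 1 ha hn.ne'
  have hma : m * a ≡ 1 [MOD n] := by rw [mul_comm]; exact hm
  have hmn : m.Coprime n := Nat.Coprime.of_mul_modEq (by rwa [mul_comm]) (Nat.coprime_one_left n)
  set w := m * b % n
  have hwn : w < n := Nat.mod_lt _ hn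
  have hjw : ∀ j ≤ k, ¬ n ∣ j + w := by
    intro j hj hdvd
    refine hb j hj (hmn.symm.dvd_of_dvd_mul_left (Nat.modEq_zero_iff_dvd.mp ?_))
    calc m * (j * a + b) = j * (m * a) + m * b := by ring
      _ ≡ j * 1 + w [MOD n] := (hma.mul_left j).add (Nat.mod_modEq _ _).symm
      _ ≡ 0 [MOD n] := by rw [mul_one]; exact Nat.modEq_zero_iff_dvd.mpr hdvd
  have hw0 : 0 < w := Nat.pos_of_ne_zero fun h ↦ hjw 0 k.zero_le (by simp [h])
  have hwk : w + k < n := by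
    by_contra h
    exact hjw (n - w) (by omega) (by rw [Nat.sub_add_cancel hwn.le])
  refine ⟨m, hmn, ?_⟩
  rw [lpr_eq_of_modEq one_pos hn1 hma, lpr_eq_of_modEq hw0 hwn (Nat.mod_modEq _ _).symm]
  omega

theorem exists_coprime_mul_lpr_lt_of_prime_dvd {p μ e a₀ b k : ℕ} (hp : p.Prime) (hk : k < p)
    (he : 0 < e) (heμ : e < μ) (ha₀ : ¬ p ∣ a₀) (hb : ¬ p ∣ b) :
    ∃ m, m.Coprime (p ^ μ) ∧
      k * lpr (p ^ μ) (m * (p ^ e * a₀)) + lpr (p ^ μ) (m * b) < p ^ μ := by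
  have hp0 := hp.pos
  set q := p ^ (μ - e) with hq
  have hnq : p ^ μ = p ^ e * q := by rw [hq, ← pow_add]; congr 1; omega
  have hpq : p ∣ q := dvd_pow_self p (by omega)
  have hcop : ∀ {y}, ¬ p ∣ y → ∀ r, y.Coprime (p ^ r) := fun hy r ↦
    (hp.coprime_iff_not_dvd.mpr hy).symm.pow_right r
  obtain ⟨w, hwq, hw⟩ := Nat.exists_mul_mod_eq_of_coprime b (hcop ha₀ (μ - e)) (by positivity)
  have hwp : ¬ p ∣ w := fun h ↦ hb ((Nat.ModEq.dvd_iff hw hpq).mp (h.mul_left a₀))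
  obtain ⟨m, -, hm⟩ := Nat.exists_mul_mod_eq_of_coprime w (hcop hb μ) (by positivity)
  have hmb : m * b ≡ w [MOD p ^ μ] := by rw [mul_comm]; exact hm
  have hma₀ : a₀ * m ≡ 1 [MOD q] := by
    refine Nat.ModEq.cancel_left_of_coprime (c := b) (hcop hb _).symm ?_
    calc b * (a₀ * m) = a₀ * (b * m) := by ring
      _ ≡ a₀ * w [MOD q] := ((hnq ▸ hm : b * m ≡ w [MOD p ^ e * q]).of_mul_left _).mul_left a₀
      _ ≡ b * 1 [MOD q] := by rw [mul_one]; exact hw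
  have hma : m * (p ^ e * a₀) ≡ p ^ e [MOD p ^ μ] := by
    rw [hnq, show m * (p ^ e * a₀) = p ^ e * (a₀ * m) by ring]
    simpa using hma₀.mul_left' (p ^ e)
  have hpe : p ^ e < p ^ μ := Nat.pow_lt_pow_right hp.one_lt heμ
  have hqμ : q ≤ p ^ (μ - 1) := Nat.pow_le_pow_right hp0 (by omega)
  have hpeμ : p ^ e ≤ p ^ (μ - 1) := Nat.pow_le_pow_right hp0 (by omega)
  refine ⟨m, Nat.Coprime.of_mul_modEq hm (hcop hwp μ), ?_⟩
  rw [lpr_eq_of_modEq (by positivity) hpe hma,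
    lpr_eq_of_modEq (Nat.pos_of_ne_zero (by rintro rfl; exact hwp (dvd_zero p)))
      (hwq.trans_le (hqμ.trans (Nat.pow_le_pow_right hp0 (by omega)))) hmb]
  calc k * p ^ e + w < k * p ^ (μ - 1) + p ^ (μ - 1) :=
      Nat.add_lt_add_of_le_of_lt (Nat.mul_le_mul_left k hpeμ) (hwq.trans_le hqμ)
    _ = (k + 1) * p ^ (μ - 1) := by ring
    _ ≤ p * p ^ (μ - 1) := by gcongr; omega
    _ = p ^ μ := by rw [← pow_succ']; congr 1; omega

theorem exists_coprime_mul_lpr_lt {p μ a b k : ℕ} (hp : p.Prime) (hk : k < p)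
    (ha : ¬ p ^ μ ∣ a) (hab : ¬ (p ∣ a ∧ p ∣ b)) (hb : ∀ j ≤ k, ¬ p ^ μ ∣ j * a + b) :
    ∃ m, m.Coprime (p ^ μ) ∧ k * lpr (p ^ μ) (m * a) + lpr (p ^ μ) (m * b) < p ^ μ := by
  by_cases hpa : p ∣ a
  · have ha0 : a ≠ 0 := by rintro rfl; exact ha (dvd_zero _)
    obtain ⟨e, a₀, ha₀, rfl⟩ := Nat.exists_eq_pow_mul_and_not_dvd ha0 p hp.ne_one
    have he : 0 < e := Nat.pos_of_ne_zero (by rintro rfl; exact ha₀ (by simpa using hpa))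
    have heμ : e < μ := by
      by_contra h
      exact ha ((pow_dvd_pow p (not_lt.mp h)).mul_right a₀)
    exact exists_coprime_mul_lpr_lt_of_prime_dvd hp hk he heμ ha₀ (hab ⟨hpa, ·⟩)
  · exact exists_coprime_mul_lpr_lt_of_coprime (pow_pos hp.pos μ)
      ((hp.coprime_iff_not_dvd.mpr hpa).symm.pow_right μ) hb

theorem exists_coprime_sum_lpr_eq {ι : Type*} [Fintype ι] [DecidableEq ι] {p μ : ℕ}
    (hp : p.Prime) {x : ι → ℕ} (hzs : p ^ μ ∣ ∑ i, x i)
    (hmin : ∀ s : Finset ι, s.Nonempty → s ≠ univ → ¬ p ^ μ ∣ ∑ i ∈ s, x i)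
    (hgcd : ∀ d, d ∣ p ^ μ → (∀ i, d ∣ x i) → d = 1)
    {T : Finset ι} {a : ℕ} (hT : ∀ t ∈ T, x t = a) (hTne : T.Nonempty) (hTp : #T < p)
    {l l' : ι} (hll' : l ≠ l') (hTc : Tᶜ = {l, l'}) :
    ∃ m, m.Coprime (p ^ μ) ∧ ∑ i, lpr (p ^ μ) (m * x i) = p ^ μ := by
  have hl : l ∉ T := mem_compl.mp (hTc ▸ mem_insert_self l {l'})
  have hl' : l' ∉ T := mem_compl.mp (hTc ▸ mem_insert_of_mem (mem_singleton_self l'))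
  have hne : ∀ s : Finset ι, l' ∉ s → s ≠ univ := fun s hs h ↦ hs (h ▸ mem_univ l')
  have ha : ¬ p ^ μ ∣ a := by
    obtain ⟨t, ht⟩ := hTne
    simpa [hT t ht] using hmin {t} (singleton_nonempty t)
      (hne _ (by rintro h; exact hl' (mem_singleton.mp h ▸ ht)))
  have hb : ∀ j ≤ #T, ¬ p ^ μ ∣ j * a + x l := by
    intro j hj
    obtain ⟨J, hJT, rfl⟩ := exists_subset_card_eq hj
    have := hmin (insert l J) (insert_nonempty _ _)
      (hne _ (by simpa [hll'.symm] using fun h ↦ hl' (hJT h)))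
    rwa [sum_insert (fun h ↦ hl (hJT h)), sum_const_nat (fun t ht ↦ hT t (hJT ht)),
      add_comm] at this
  have hab : ¬ (p ∣ a ∧ p ∣ x l) := by
    rintro ⟨hpa, hpb⟩
    have hμ : μ ≠ 0 := by rintro rfl; exact ha (one_dvd a)
    have hrest : ∀ t ≠ l', p ∣ x t := by
      intro t ht
      by_cases htT : t ∈ T
      · exact hT t htT ▸ hpa
      · have : t ∈ ({l, l'} : Finset ι) := hTc ▸ mem_compl.mpr htT
        simp only [mem_insert, mem_singleton, ht, or_false] at this
        exact this ▸ hpb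
    have hpl' : p ∣ x l' := by
      rw [← add_sum_erase _ _ (mem_univ l')] at hzs
      exact (Nat.dvd_add_left (dvd_sum fun t ht ↦ hrest t (ne_of_mem_erase ht))).mp
        ((dvd_pow_self p hμ).trans hzs)
    refine hp.one_lt.ne' (hgcd p (dvd_pow_self p hμ) fun t ↦ ?_)
    by_cases ht : t = l'
    · exact ht ▸ hpl'
    · exact hrest t ht
  obtain ⟨m, hm, hlt⟩ := exists_coprime_mul_lpr_lt hp hTp ha hab hb
  refine ⟨m, hm, sum_lpr_eq_of_lt m (pow_pos hp.pos μ) ⟨l, mem_univ l⟩ hzs ?_⟩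
  have hc := lpr_le (pow_pos hp.pos μ) (m * x l')
  calc ∑ i, lpr (p ^ μ) (m * x i)
      = ∑ i ∈ T, lpr (p ^ μ) (m * x i) + ∑ i ∈ Tᶜ, lpr (p ^ μ) (m * x i) :=
        (sum_add_sum_compl T _).symm
    _ = #T * lpr (p ^ μ) (m * a) + (lpr (p ^ μ) (m * x l) + lpr (p ^ μ) (m * x l')) := by
        rw [sum_const_nat fun t ht ↦ by rw [hT t ht], hTc, sum_pair hll']
    _ < 2 * p ^ μ := by omega

theorem stmt_2_general (p μ n : ℕ) (hp : p.Prime) (hp5 : 5 ≤ p)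
    (hn : n = p ^ μ) (x : Fin 5 → ℕ)
    (hzs : n ∣ ∑ i, x i)
    (hmin : ∀ s : Finset (Fin 5), s.Nonempty → s ≠ Finset.univ →
      ¬ n ∣ ∑ i ∈ s, x i)
    (hgcd : Nat.gcd n (Nat.gcd (x 0) (Nat.gcd (x 1) (Nat.gcd (x 2)
      (Nat.gcd (x 3) (x 4))))) = 1)
    (h3eq : ∃ i j k : Fin 5, i ≠ j ∧ i ≠ k ∧ j ≠ k ∧ x i = x j ∧ x i = x k) :
    ∃ m : ℕ, Nat.gcd m n = 1 ∧ (∑ i, lpr n (m * x i)) = n := by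
  subst hn
  obtain ⟨i, j, k, hij, hik, hjk, hxj, hxk⟩ := h3eq
  have hT : #{i, j, k} = 3 := card_eq_three.mpr ⟨i, j, k, hij, hik, hjk, rfl⟩
  obtain ⟨l, l', hll', hTc⟩ :=
    card_eq_two.mp (by rw [card_compl, hT]; rfl : #({i, j, k} : Finset (Fin 5))ᶜ = 2)
  have hcommon : ∀ d, d ∣ p ^ μ → (∀ t, d ∣ x t) → d = 1 := fun d hd hdx ↦
    Nat.dvd_one.mp <| hgcd ▸ Nat.dvd_gcd hd <| Nat.dvd_gcd (hdx 0) <| Nat.dvd_gcd (hdx 1) <|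
      Nat.dvd_gcd (hdx 2) <| Nat.dvd_gcd (hdx 3) (hdx 4)
  exact exists_coprime_sum_lpr_eq hp hzs hmin hcommon (a := x i) (by simp [← hxj, ← hxk])
    (insert_nonempty _ _) (by omega) hll' hTc

theorem stmt_2 (p μ n : ℕ) (hp : p.Prime) (hp5 : 5 ≤ p) (hμ : 2 ≤ μ)
    (hn : n = p ^ μ) (x : Fin 5 → ℕ)
    (hx : ∀ i, 1 ≤ x i ∧ x i ≤ n - 1)
    (hzs : n ∣ ∑ i, x i)
    (hmin : ∀ s : Finset (Fin 5), s.Nonempty → s ≠ Finset.univ →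
      ¬ n ∣ ∑ i ∈ s, x i)
    (hgcd : Nat.gcd n (Nat.gcd (x 0) (Nat.gcd (x 1) (Nat.gcd (x 2)
      (Nat.gcd (x 3) (x 4))))) = 1)
    (h3eq : ∃ i j k : Fin 5, i ≠ j ∧ i ≠ k ∧ j ≠ k ∧ x i = x j ∧ x i = x k) :
    ∃ m : ℕ, Nat.gcd m n = 1 ∧ (∑ i, lpr n (m * x i)) = n :=
  stmt_2_general p μ n hp hp5 hn x hzs hmin hgcd h3eq
end

section
/- Let n be an odd integer and let a, b, c be integers with 4 ≤ a ≤ b < c < n/2 and c = a + b − 2, so that 1 + 1 + c + (n−b) + (n−a) = 2n. Suppose there exist integers M and k with gcd(n, M) = 1, kn/c < M < kn/b, and M·a < n. Then |M·1|_n + |M·1|_n + |M·c|_n + |M·(n−b)|_n + |M·(n−a)|_n = n. -/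
theorem lpr_eq_sub_mul {n x : ℕ} {q : ℤ} (hlo : q * n < x) (hhi : (x : ℤ) ≤ q * n + n) :
    (lpr n x : ℤ) = x - q * n := by
  have hmod : ((x % n : ℕ) : ℤ) = (x - q * n) % n := by
    rw [Int.natCast_mod, ← Int.sub_mul_emod_self_right (x : ℤ) q]
  unfold lpr
  by_cases hr : (x : ℤ) - q * n = n
  · have hx : x % n = 0 := by
      rw [hr, Int.emod_self] at hmod
      exact_mod_cast hmod
    rw [if_pos hx, hr]
  · have hr' : ((x : ℤ) - q * n) % n = x - q * n := Int.emod_eq_of_lt (by omega) (by omega)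
    rw [hr'] at hmod
    rw [if_neg (by omega), hmod]

theorem stmt_3_general (n a b c : ℕ)
    (hbc : b < c) (hc : 2 * c < n) (hcab : c = a + b - 2)
    (M k : ℕ) (hk1 : k * n < M * c) (hk2 : M * b < k * n)
    (hMa : M * a < n) :
    lpr n (M * 1) + lpr n (M * 1) + lpr n (M * c) + lpr n (M * (n - b)) +
      lpr n (M * (n - a)) = n := by
  have hM : 0 < M := Nat.pos_of_mul_pos_right (Nat.zero_lt_of_lt hk1)
  have hbn : b ≤ n := by omega
  have han : a ≤ n := (Nat.le_mul_of_pos_left a hM).trans hMa.le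
  have hsum : (M : ℤ) * c + 2 * M = M * a + M * b := by
    rw [hcab]
    push_cast [show 2 ≤ a + b by omega]
    ring
  zify at hk1 hk2 hMa
  have h1 : (lpr n (M * 1) : ℤ) = M := by
    simpa using lpr_eq_sub_mul (n := n) (x := M * 1) (q := 0)
      (by simpa using hM) (by push_cast; linarith)
  have hc' := lpr_eq_sub_mul (n := n) (x := M * c) (q := k)
    (by push_cast; linarith) (by push_cast; linarith)
  have hb' := lpr_eq_sub_mul (n := n) (x := M * (n - b)) (q := M - k)
    (by push_cast [hbn]; linarith) (by push_cast [hbn]; linarith)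
  have ha' := lpr_eq_sub_mul (n := n) (x := M * (n - a)) (q := M - 1)
    (by push_cast [han]; linarith) (by push_cast [han]; linarith)
  zify
  rw [h1, hc', hb', ha']
  push_cast [hbn, han]
  linear_combination hsum

theorem stmt_3 (n a b c : ℕ) (hodd : Odd n) (ha : 4 ≤ a) (hab : a ≤ b)
    (hbc : b < c) (hc : 2 * c < n) (hcab : c = a + b - 2)
    (M k : ℕ) (hM : Nat.gcd n M = 1) (hk1 : k * n < M * c) (hk2 : M * b < k * n)
    (hMa : M * a < n) :
    lpr n (M * 1) + lpr n (M * 1) + lpr n (M * c) + lpr n (M * (n - b)) +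
      lpr n (M * (n - a)) = n :=
  stmt_3_general n a b c hbc hc hcab M k hk1 hk2 hMa
end

section
/- Let n = p^μ be a prime power with p ≥ 7, μ ≥ 2, and n ≥ 289. Let a, b, c be integers with 3 ≤ a ≤ b < c < n/2 and c = a + b − 2. Let s = ⌊b/a⌋. If s(a−2)n/(bc) > 2, then there exists an integer M with gcd(M, n) = 1, sn/c < M < sn/b, and M·a < n; consequently |M|_n + |M|_n + |M·c|_n + |M·(n−b)|_n + |M·(n−a)|_n = n. -/
theorem lpr_eq_sub_of_lt_of_le {n k x : ℕ} (hlo : k * n < x) (hhi : x ≤ k * n + n) :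
    lpr n x = x - k * n := by
  obtain ⟨r, rfl⟩ : ∃ r, x = r + k * n := ⟨x - k * n, by omega⟩
  rw [Nat.add_sub_cancel]
  unfold lpr
  rcases (show r ≤ n by omega).lt_or_eq with hr | rfl
  · rw [Nat.add_mul_mod_self_right, Nat.mod_eq_of_lt hr, if_neg (by omega)]
  · simp

theorem lpr_sum_eq_of_mul_mem_window {n a b c s M : ℕ} (hcab : c + 2 = a + b) (hbn : b < n)
    (hMc : s * n < M * c) (hMb : M * b < s * n) (hMa : M * a < n) :
    lpr n M + lpr n M + lpr n (M * c) + lpr n (M * (n - b)) + lpr n (M * (n - a)) = n := by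
  have hbc : b < c := by
    by_contra! h
    nlinarith [Nat.mul_le_mul_left M h]
  have hM : 0 < M := Nat.pos_of_ne_zero (by rintro rfl; simp at hMc)
  have hMcab : M * c + 2 * M = M * a + M * b := by
    rw [← mul_add, ← hcab]; ring
  have hMbn : M * b < M * n := Nat.mul_lt_mul_of_pos_left hbn hM
  have hMn : M < n := lt_of_le_of_lt (Nat.le_mul_of_pos_right M (by omega)) hMa
  have hsM : s ≤ M := by
    by_contra! h
    nlinarith [Nat.mul_le_mul_right n (Nat.succ_le_of_lt h)]
  have hlprM : lpr n M = M := by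
    simpa using lpr_eq_sub_of_lt_of_le (k := 0) (by simpa using hM) (by simpa using hMn.le)
  have hlprMc : lpr n (M * c) = M * c - s * n := lpr_eq_sub_of_lt_of_le hMc (by omega)
  have hsn : s * n ≤ M * n := Nat.mul_le_mul_right n hsM
  have hlprMnb : lpr n (M * (n - b)) = s * n - M * b := by
    have h1 : M * (n - b) = M * n - M * b := Nat.mul_sub M n b
    have h2 : (M - s) * n = M * n - s * n := Nat.sub_mul M s n
    rw [lpr_eq_sub_of_lt_of_le (k := M - s) (by omega) (by omega)]
    omega
  have hlprMna : lpr n (M * (n - a)) = n - M * a := by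
    have h1 : M * (n - a) = M * n - M * a := Nat.mul_sub M n a
    have h2 : (M - 1) * n = M * n - n := by rw [Nat.sub_mul, one_mul]
    have h3 : 0 < M * a := Nat.mul_pos hM (by omega)
    have h4 : n ≤ M * n := Nat.le_mul_of_pos_left n hM
    rw [lpr_eq_sub_of_lt_of_le (k := M - 1) (by omega) (by omega)]
    omega
  omega

/-- If `(L/c, L/b)` has length more than `2`, it contains two consecutive integers. -/
theorem exists_mul_lt_and_succ_mul_lt {L b c : ℕ} (h : 2 * (b * c) < (c - b) * L) :
    ∃ m, L < m * c ∧ (m + 1) * b < L := by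
  have hbc : b < c := by
    by_contra! hcb
    simp [Nat.sub_eq_zero_of_le hcb] at h
  refine ⟨L / c + 1, by linarith [Nat.lt_div_mul_add (a := L) (by omega : 0 < c)], ?_⟩
  refine Nat.lt_of_mul_lt_mul_left (a := c) ?_
  have hdiv : L / c * c ≤ L := Nat.div_mul_le_self L c
  have hcL : c * L = (c - b) * L + b * L := by rw [← add_mul, Nat.sub_add_cancel hbc.le]
  calc c * ((L / c + 1 + 1) * b) = L / c * c * b + 2 * (b * c) := by ring
    _ ≤ L * b + 2 * (b * c) := by gcongr
    _ < c * L := by rw [hcL]; linarith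

theorem Nat.Prime.coprime_pow_or_succ_coprime_pow {p : ℕ} (hp : p.Prime) (m μ : ℕ) :
    m.Coprime (p ^ μ) ∨ (m + 1).Coprime (p ^ μ) := by
  by_cases hm : p ∣ m
  · have hm1 : ¬ p ∣ m + 1 := fun h => hp.not_dvd_one ((Nat.dvd_add_right hm).mp h)
    exact .inr ((hp.coprime_iff_not_dvd.2 hm1).symm.pow_right μ)
  · exact .inl ((hp.coprime_iff_not_dvd.2 hm).symm.pow_right μ)

theorem stmt_4_general (p μ n a b c : ℕ) (hp : p.Prime)
    (hn : n = p ^ μ)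
    (ha : 3 ≤ a) (hc : 2 * c < n)
    (hcab : c = a + b - 2)
    (hyp : 2 * (b * c) < (b / a) * (a - 2) * n) :
    ∃ M : ℕ, Nat.gcd M n = 1 ∧ (b / a) * n < M * c ∧ M * b < (b / a) * n ∧
      M * a < n ∧
      lpr n M + lpr n M + lpr n (M * c) + lpr n (M * (n - b)) +
        lpr n (M * (n - a)) = n := by
  have hwindow : 2 * (b * c) < (c - b) * (b / a * n) := by
    rw [show c - b = a - 2 by omega]
    linarith
  obtain ⟨m, hmc, hmb⟩ := exists_mul_lt_and_succ_mul_lt hwindow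
  obtain ⟨M, hMn, hMc, hMb⟩ : ∃ M, M.Coprime n ∧ b / a * n < M * c ∧ M * b < b / a * n := by
    subst hn
    rcases hp.coprime_pow_or_succ_coprime_pow m μ with h | h
    · exact ⟨m, h, hmc, lt_of_le_of_lt (by gcongr; omega) hmb⟩
    · exact ⟨m + 1, h, lt_of_le_of_lt' (by gcongr; omega) hmc, hmb⟩
  have hMa : M * a < n := by
    refine Nat.lt_of_mul_lt_mul_left (a := b / a) (lt_of_le_of_lt ?_ hMb)
    calc b / a * (M * a) = M * (b / a * a) := by ring
      _ ≤ M * b := Nat.mul_le_mul_left M (Nat.div_mul_le_self b a)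
  exact ⟨M, hMn, hMc, hMb, hMa, lpr_sum_eq_of_mul_mem_window (by omega) (by omega) hMc hMb hMa⟩

theorem stmt_4 (p μ n a b c : ℕ) (hp : p.Prime) (hp7 : 7 ≤ p) (hμ : 2 ≤ μ)
    (hn : n = p ^ μ) (hn289 : 289 ≤ n)
    (ha : 3 ≤ a) (hab : a ≤ b) (hbc : b < c) (hc : 2 * c < n)
    (hcab : c = a + b - 2)
    (hyp : 2 * (b * c) < (b / a) * (a - 2) * n) :
    ∃ M : ℕ, Nat.gcd M n = 1 ∧ (b / a) * n < M * c ∧ M * b < (b / a) * n ∧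
      M * a < n ∧
      lpr n M + lpr n M + lpr n (M * c) + lpr n (M * (n - b)) +
        lpr n (M * (n - a)) = n :=
  stmt_4_general p μ n a b c hp hn ha hc hcab hyp
end

section
/- Let n = p^μ be a prime power with p ≥ 7, μ ≥ 2, and n ≥ 289. Let a, b, c be integers with 3 ≤ a ≤ b < c < n/2 and c = a + b − 2, and let s = ⌊b/a⌋. If (s−1)(a−2)n/(bc) > 1 and n/c < p − 2, then there exists an integer M coprime to n with M·a < n and kn/c < M < kn/b for k = s−1 or k = s; consequently the sequence (1, 1, c, n−b, n−a) over Z/n has index 1. -/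
lemma lpr_eq_of_eq_mul_add {n x q r : ℕ} (hx : x = q * n + r) (hr₀ : 0 < r) (hrn : r < n) :
    lpr n x = r := by
  have hmod : x % n = r := by
    rw [hx, Nat.mul_comm, Nat.mul_add_mod, Nat.mod_eq_of_lt hrn]
  simp only [lpr, hmod, hr₀.ne', if_false]

lemma lpr_sum_eq_of_mem_window {n a b c M k : ℕ} (habc : a + b = c + 2) (ha : 0 < a)
    (hcn : c < n) (hlow : k * n < M * c) (hup : M * b < k * n) (hMa : M * a < n) :
    lpr n M + lpr n M + lpr n (M * c) + lpr n (M * (n - b)) + lpr n (M * (n - a)) = n := by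
  have hM : 0 < M := Nat.pos_of_ne_zero fun h => by simp [h] at hlow
  have hMn : M < n := (Nat.le_mul_of_pos_right M ha).trans_lt hMa
  have hkM : k ≤ M :=
    (Nat.lt_of_mul_lt_mul_right (hlow.trans_le (Nat.mul_le_mul_left M hcn.le))).le
  have hsum : M * a + M * b = M * c + 2 * M := by rw [← Nat.mul_add, habc]; ring
  have h₀ : lpr n M = M := lpr_eq_of_eq_mul_add (q := 0) (by simp) hM hMn
  have h₁ : lpr n (M * c) = M * c - k * n :=
    lpr_eq_of_eq_mul_add (q := k) (by omega) (by omega) (by omega)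
  have h₂ : lpr n (M * (n - b)) = k * n - M * b := by
    refine lpr_eq_of_eq_mul_add (q := M - k) ?_ (by omega) (by omega)
    have : k * n ≤ M * n := Nat.mul_le_mul_right n hkM
    rw [Nat.mul_sub, Nat.sub_mul]
    have : M * b ≤ M * n := by omega
    omega
  have h₃ : lpr n (M * (n - a)) = n - M * a := by
    refine lpr_eq_of_eq_mul_add (q := M - 1) ?_ (by omega) (by omega)
    have : n ≤ M * n := Nat.le_mul_of_pos_left n hM
    rw [Nat.mul_sub, Nat.sub_mul, one_mul]
    omega
  omega

lemma div_add_one_mul_lt {X b c d : ℕ} (hc : c = b + d) (h : b * c < X * d) :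
    (X / c + 1) * b < X := by
  have hc₀ : 0 < c := Nat.pos_of_ne_zero fun h0 => by
    obtain rfl : d = 0 := by omega
    simp at h
  refine Nat.lt_of_mul_lt_mul_right (a := c) ?_
  calc (X / c + 1) * b * c = X / c * c * b + b * c := by ring
    _ ≤ X * b + b * c := by gcongr; exact Nat.div_mul_le_self X c
    _ < X * b + X * d := by gcongr
    _ = X * c := by rw [hc]; ring

lemma div_lt_add_div_le_add_one {x y c : ℕ} (hc : 0 < c) (hcy : c ≤ y) :
    x / c < (x + y) / c ∧ (x + y) / c ≤ x / c + y / c + 1 := by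
  have hlow : x / c + y / c ≤ (x + y) / c := Nat.div_add_div_le_add_div
  have hy : 1 ≤ y / c := (Nat.one_le_div_iff hc).2 hcy
  exact ⟨by omega, Nat.add_div_le_div_add_div_add_one x y c⟩

lemma coprime_pow_or_coprime_pow {p x y : ℕ} (hp : p.Prime) (hxy : x < y) (hyx : y - x < p)
    (μ : ℕ) : x.Coprime (p ^ μ) ∨ y.Coprime (p ^ μ) := by
  have hdvd : ¬ (p ∣ x ∧ p ∣ y) := fun ⟨hx, hy⟩ =>
    (Nat.le_of_dvd (Nat.sub_pos_of_lt hxy) (Nat.dvd_sub hy hx)).not_gt hyx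
  rw [not_and_or] at hdvd
  exact hdvd.imp (fun h => ((hp.coprime_iff_not_dvd.2 h).pow_left μ).symm)
    (fun h => ((hp.coprime_iff_not_dvd.2 h).pow_left μ).symm)

lemma mul_lt_of_mul_lt_mul_of_le_div {M a b k n : ℕ} (ha : 0 < a) (hk : k ≤ b / a)
    (hMb : M * b < k * n) : M * a < n := by
  refine Nat.lt_of_mul_lt_mul_right (a := b) ?_
  calc M * a * b = M * b * a := by ring
    _ < k * n * a := by gcongr
    _ ≤ b / a * a * n := by rw [Nat.mul_right_comm]; gcongr
    _ ≤ b * n := by gcongr; exact Nat.div_mul_le_self b a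
    _ = n * b := Nat.mul_comm b n

theorem stmt_5_general (p μ n a b c : ℕ) (hp : p.Prime)
    (hn : n = p ^ μ)
    (ha : 3 ≤ a) (hc : 2 * c < n)
    (hcab : c = a + b - 2)
    (hyp1 : b * c < (b / a - 1) * (a - 2) * n) (hyp2 : n < (p - 2) * c) :
    ∃ M : ℕ, Nat.gcd M n = 1 ∧ M * a < n ∧
      (∃ k : ℕ, (k = b / a - 1 ∨ k = b / a) ∧ k * n < M * c ∧ M * b < k * n) ∧
      lpr n M + lpr n M + lpr n (M * c) + lpr n (M * (n - b)) +
        lpr n (M * (n - a)) = n := by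
  set s := b / a
  have hcb : c = b + (a - 2) := by omega
  have hc₀ : 0 < c := by omega
  have hs : 2 ≤ s := by
    by_contra h
    simp [show s - 1 = 0 by omega] at hyp1
  obtain ⟨k, hk, hcop⟩ : ∃ k, (k = s - 1 ∨ k = s) ∧ Nat.gcd (k * n / c + 1) n = 1 := by
    have hsn : (s - 1) * n + n = s * n := by rw [← Nat.succ_mul]; congr 1; omega
    obtain ⟨hlt, hle⟩ := div_lt_add_div_le_add_one (x := (s - 1) * n) hc₀ (by omega : c ≤ n)
    rw [hsn] at hlt hle
    have hnc : n / c < p - 2 := (Nat.div_lt_iff_lt_mul hc₀).2 hyp2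
    rcases coprime_pow_or_coprime_pow hp (x := (s - 1) * n / c + 1) (y := s * n / c + 1)
      (by omega) (by omega) μ with h | h
    · exact ⟨_, .inl rfl, hn ▸ h⟩
    · exact ⟨_, .inr rfl, hn ▸ h⟩
  have hup : (k * n / c + 1) * b < k * n := div_add_one_mul_lt hcb <|
    calc b * c < (s - 1) * (a - 2) * n := hyp1
      _ ≤ k * (a - 2) * n := by gcongr; omega
      _ = k * n * (a - 2) := by ring
  have hlow : k * n < (k * n / c + 1) * c := by
    rw [Nat.mul_comm _ c]; exact Nat.lt_mul_div_succ _ hc₀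
  have hMa := mul_lt_of_mul_lt_mul_of_le_div (by omega) (by omega : k ≤ s) hup
  exact ⟨_, hcop, hMa, ⟨k, hk, hlow, hup⟩,
    lpr_sum_eq_of_mem_window (by omega) (by omega) (by omega) hlow hup hMa⟩

theorem stmt_5 (p μ n a b c : ℕ) (hp : p.Prime) (hp7 : 7 ≤ p) (hμ : 2 ≤ μ)
    (hn : n = p ^ μ) (hn289 : 289 ≤ n)
    (ha : 3 ≤ a) (hab : a ≤ b) (hbc : b < c) (hc : 2 * c < n)
    (hcab : c = a + b - 2)
    (hyp1 : b * c < (b / a - 1) * (a - 2) * n) (hyp2 : n < (p - 2) * c) :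
    ∃ M : ℕ, Nat.gcd M n = 1 ∧ M * a < n ∧
      (∃ k : ℕ, (k = b / a - 1 ∨ k = b / a) ∧ k * n < M * c ∧ M * b < k * n) ∧
      lpr n M + lpr n M + lpr n (M * c) + lpr n (M * (n - b)) +
        lpr n (M * (n - a)) = n :=
  stmt_5_general p μ n a b c hp hn ha hc hcab hyp1 hyp2
end

section
/- Let n = p^μ be a prime power with p ≥ 7, μ ≥ 2, and n ≥ 289. Let a, b, c be integers with 6 ≤ a ≤ b < c < n/2, c = a + b − 2, and ⌊b/a⌋ ≥ 4, such that (1, 1, c, n−b, n−a) is a minimal zero-sum sequence over Z/n. Then there exists a unit m modulo n with |m|_n + |m|_n + |m·c|_n + |m·(n−b)|_n + |m·(n−a)|_n = n. -/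
def IsAdmissible (n a b c m : ℕ) : Prop :=
  m * a < n ∧ ∃ j, m * b < j * n ∧ j * n < m * c

theorem lpr_add_mul_self {n r : ℕ} (k : ℕ) (hr : 0 < r) (hrn : r < n) :
    lpr n (r + k * n) = r := by
  rw [lpr, Nat.add_mul_mod_self_right, Nat.mod_eq_of_lt hrn, if_neg hr.ne']

theorem IsAdmissible.lpr_sum_eq {n a b c m : ℕ} (habc : a + b = c + 2) (hcn : c < n)
    (h : IsAdmissible n a b c m) :
    lpr n m + lpr n m + lpr n (m * c) + lpr n (m * (n - b)) + lpr n (m * (n - a)) = n := by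
  obtain ⟨hma, j, hbj, hjc⟩ := h
  have hm : 0 < m := Nat.pos_of_ne_zero (by rintro rfl; simp at hjc)
  have hjm : j * n ≤ m * n := (hjc.trans_le (Nat.mul_le_mul_left m hcn.le)).le
  have hnm : n ≤ m * n := Nat.le_mul_of_pos_left n hm
  have hmma : m ≤ m * a := Nat.le_mul_of_pos_right m (by nlinarith)
  have hsum : m * a + m * b = m * c + 2 * m := by rw [← mul_add, habc]; ring
  have hlm : lpr n m = m := by simpa using lpr_add_mul_self (n := n) 0 hm (by omega)
  have hlc : lpr n (m * c) = m * c - j * n := by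
    have := lpr_add_mul_self (n := n) j (r := m * c - j * n) (by omega) (by omega)
    rwa [Nat.sub_add_cancel hjc.le] at this
  have hlb : lpr n (m * (n - b)) = j * n - m * b := by
    rw [Nat.mul_sub, show m * n - m * b = (j * n - m * b) + (m - j) * n by rw [Nat.sub_mul]; omega,
      lpr_add_mul_self _ (by omega) (by omega)]
  have hla : lpr n (m * (n - a)) = n - m * a := by
    rw [Nat.mul_sub, show m * n - m * a = (n - m * a) + (m - 1) * n by rw [Nat.sub_mul]; omega,
      lpr_add_mul_self _ (by omega) (by omega)]
  rw [hlm, hlc, hlb, hla]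
  omega

theorem exists_mul_mem_Ioc (x : ℕ) {c : ℕ} (hc : 0 < c) :
    ∃ m, x < m * c ∧ m * c ≤ x + c :=
  ⟨x / c + 1, by rw [add_one_mul]; exact Nat.lt_div_mul_add hc,
    by rw [add_one_mul]; exact Nat.add_le_add_right (Nat.div_mul_le_self x c) c⟩

section Window

variable {n b d : ℕ}

theorem isAdmissible_of_window {m j s : ℕ} (hlo : j * n < m * (b + d))
    (hhi : m * (b + d) ≤ j * n + s) (hbs : b * s < d * (j * n))
    (hds : (d + 2) * (j * n + s) < (b + d) * n) : IsAdmissible n (d + 2) b (b + d) m := by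
  refine ⟨Nat.lt_of_mul_lt_mul_left (a := b + d) ?_, j,
    Nat.lt_of_mul_lt_mul_left (a := b + d) ?_, hlo⟩
  · calc (b + d) * (m * (d + 2)) = (d + 2) * (m * (b + d)) := by ring
      _ ≤ (d + 2) * (j * n + s) := Nat.mul_le_mul_left _ hhi
      _ < (b + d) * n := hds
  · calc (b + d) * (m * b) = b * (m * (b + d)) := by ring
      _ ≤ b * (j * n + s) := Nat.mul_le_mul_left _ hhi
      _ < (b + d) * (j * n) := by nlinarith

-- With `a = d + 2`, `c = b + d` and `d j n ≤ b s + d n`, these bound `d a (j n + s)` by `d c n`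
-- for the windows `s = 2 c` and `s = c` (the latter at `j + 1`).
theorem two_window_bound_of_six_mul_le (hd : 4 ≤ d) (hb : 4 * (d + 2) ≤ b)
    (hn : 6 * (b + d) ≤ n) :
    (d + 2) * (b * (2 * (b + d)) + d * n + 2 * d * (b + d)) < d * ((b + d) * n) := by
  obtain ⟨e, rfl⟩ : ∃ e, b = e + 2 := ⟨b - 2, by omega⟩
  have h1 : (d + 2) * (e + 2 + d) < 3 * d * e := by nlinarith
  have h2 : 6 * (e + 2 + d) * (d * e) ≤ n * (d * e) := Nat.mul_le_mul_right _ hn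
  nlinarith [Nat.mul_lt_mul_of_pos_right h1 (show 0 < e + 2 + d by omega)]

theorem window_bound_of_two_mul_lt (hd : 4 ≤ d) (hb : 4 * (d + 2) ≤ b)
    (hn : 2 * (b + d) < n) (h289 : 289 ≤ n) :
    (d + 2) * (b * (b + d) + 2 * d * n + d * (b + d)) < d * ((b + d) * n) := by
  obtain ⟨e, rfl⟩ : ∃ e, b = e + d + 4 := ⟨b - d - 4, by omega⟩
  suffices h : (d + 2) * (e + 2 * d + 4) * (e + 2 * d + 4) < d * e * n by nlinarith
  have hc : 0 < e + 2 * d + 4 := by omega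
  rcases le_or_gt (4 * (e + 2 * d + 4)) n with h4 | h4
  · have h1 : (d + 2) * (e + 2 * d + 4) < 4 * d * e := by nlinarith
    have h2 : 4 * (e + 2 * d + 4) * (d * e) ≤ n * (d * e) := Nat.mul_le_mul_right _ h4
    nlinarith [Nat.mul_lt_mul_of_pos_right h1 hc]
  · -- `n < 4 c` and `289 ≤ n` force `c > 72`
    have h1 : (d + 2) * (e + 2 * d + 4) < 2 * d * e := by nlinarith
    have h2 : 2 * (e + 2 * d + 4) * (d * e) < n * (d * e) :=
      Nat.mul_lt_mul_of_pos_right (by omega) (Nat.mul_pos (by omega) (by omega))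
    nlinarith [Nat.mul_lt_mul_of_pos_right h1 hc]

theorem exists_isAdmissible_and_succ (hd : 4 ≤ d) (hb : 4 * (d + 2) ≤ b)
    (hn : 6 * (b + d) ≤ n) :
    ∃ m, IsAdmissible n (d + 2) b (b + d) m ∧ IsAdmissible n (d + 2) b (b + d) (m + 1) := by
  obtain ⟨j, hbj, hjb⟩ :=
    exists_mul_mem_Ioc (b * (2 * (b + d))) (Nat.mul_pos (by omega : 0 < d) (by omega : 0 < n))
  obtain ⟨m, hjm, hmj⟩ := exists_mul_mem_Ioc (j * n) (by omega : 0 < b + d)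
  have hdjn : j * (d * n) = d * (j * n) := by ring
  have hbs : b * (2 * (b + d)) < d * (j * n) := hdjn ▸ hbj
  have hds : (d + 2) * (j * n + 2 * (b + d)) < (b + d) * n := by
    refine Nat.lt_of_mul_lt_mul_left (a := d) ?_
    calc d * ((d + 2) * (j * n + 2 * (b + d)))
        = (d + 2) * (j * (d * n) + 2 * d * (b + d)) := by ring
      _ ≤ (d + 2) * (b * (2 * (b + d)) + d * n + 2 * d * (b + d)) :=
        Nat.mul_le_mul_left _ (by omega)
      _ < d * ((b + d) * n) := two_window_bound_of_six_mul_le hd hb hn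
  have hsucc : (m + 1) * (b + d) = m * (b + d) + (b + d) := add_one_mul m (b + d)
  exact ⟨m, isAdmissible_of_window hjm (by omega) hbs hds,
    isAdmissible_of_window (by omega) (by omega) hbs hds⟩

theorem exists_isAdmissible_pair_of_lt_six_mul (hd : 4 ≤ d) (hb : 4 * (d + 2) ≤ b)
    (hn : 2 * (b + d) < n) (hn6 : n < 6 * (b + d)) (h289 : 289 ≤ n) :
    ∃ m m', m < m' ∧ m' < m + 7 ∧
      IsAdmissible n (d + 2) b (b + d) m ∧ IsAdmissible n (d + 2) b (b + d) m' := by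
  have hc : 0 < b + d := by omega
  obtain ⟨j, hbj, hjb⟩ :=
    exists_mul_mem_Ioc (b * (b + d)) (Nat.mul_pos (by omega : 0 < d) (by omega : 0 < n))
  obtain ⟨m, hjm, hmj⟩ := exists_mul_mem_Ioc (j * n) hc
  obtain ⟨m', hjm', hmj'⟩ := exists_mul_mem_Ioc ((j + 1) * n) hc
  have hdjn : j * (d * n) = d * (j * n) := by ring
  have hbs : b * (b + d) < d * (j * n) := hdjn ▸ hbj
  have hjn : (j + 1) * n = j * n + n := add_one_mul j n
  have hds : (d + 2) * ((j + 1) * n + (b + d)) < (b + d) * n := by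
    refine Nat.lt_of_mul_lt_mul_left (a := d) ?_
    calc d * ((d + 2) * ((j + 1) * n + (b + d)))
        = (d + 2) * (j * (d * n) + d * n + d * (b + d)) := by ring
      _ ≤ (d + 2) * (b * (b + d) + 2 * d * n + d * (b + d)) :=
        Nat.mul_le_mul_left _ (by linarith)
      _ < d * ((b + d) * n) := window_bound_of_two_mul_lt hd hb hn h289
  have hm7 : (m + 7) * (b + d) = m * (b + d) + 7 * (b + d) := by ring
  refine ⟨m, m', Nat.lt_of_mul_lt_mul_right (a := b + d) (by omega),
    Nat.lt_of_mul_lt_mul_right (a := b + d) (by omega),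
    isAdmissible_of_window hjm hmj hbs ((Nat.mul_le_mul_left _ (by omega)).trans_lt hds),
    isAdmissible_of_window hjm' hmj' (hbs.trans_le (Nat.mul_le_mul_left _ (by omega))) hds⟩

theorem exists_isAdmissible_pair (hd : 4 ≤ d) (hb : 4 * (d + 2) ≤ b)
    (hn : 2 * (b + d) < n) (h289 : 289 ≤ n) :
    ∃ m m', m < m' ∧ m' < m + 7 ∧
      IsAdmissible n (d + 2) b (b + d) m ∧ IsAdmissible n (d + 2) b (b + d) m' := by
  rcases le_or_gt (6 * (b + d)) n with h6 | h6
  · obtain ⟨m, hm, hm'⟩ := exists_isAdmissible_and_succ hd hb h6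
    exact ⟨m, m + 1, by omega, by omega, hm, hm'⟩
  · exact exists_isAdmissible_pair_of_lt_six_mul hd hb hn h6 h289

end Window

theorem not_dvd_or_not_dvd_of_lt_of_lt_add {p m m' : ℕ} (h : m < m') (h' : m' < m + p) :
    ¬ p ∣ m ∨ ¬ p ∣ m' := by
  by_contra! hdvd
  have := Nat.le_of_dvd (by omega) (Nat.dvd_sub hdvd.2 hdvd.1)
  omega

theorem stmt_6_general (p μ n a b c : ℕ) (hp : p.Prime) (hp7 : 7 ≤ p)
    (hn : n = p ^ μ) (hn289 : 289 ≤ n)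
    (ha : 6 ≤ a) (hc : 2 * c < n)
    (hcab : c = a + b - 2) (hs : 4 ≤ b / a) :
    ∃ m : ℕ, Nat.gcd m n = 1 ∧
      lpr n m + lpr n m + lpr n (m * c) + lpr n (m * (n - b)) +
        lpr n (m * (n - a)) = n := by
  obtain ⟨d, rfl⟩ : ∃ d, a = d + 2 := ⟨a - 2, by omega⟩
  have hb : 4 * (d + 2) ≤ b := (Nat.le_div_iff_mul_le (by omega)).1 hs
  obtain rfl : c = b + d := by omega
  have hcoprime (m : ℕ) (hm : ¬ p ∣ m) : Nat.gcd m n = 1 :=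
    hn ▸ (hp.coprime_iff_not_dvd.2 hm).symm.pow_right μ
  have habc : d + 2 + b = b + d + 2 := by ring
  obtain ⟨m, m', hmm', hm'm, hm, hm'⟩ := exists_isAdmissible_pair (by omega) hb (by omega) hn289
  rcases not_dvd_or_not_dvd_of_lt_of_lt_add (p := p) hmm' (by omega) with h | h
  · exact ⟨m, hcoprime m h, hm.lpr_sum_eq habc (by omega)⟩
  · exact ⟨m', hcoprime m' h, hm'.lpr_sum_eq habc (by omega)⟩

theorem stmt_6 (p μ n a b c : ℕ) (hp : p.Prime) (hp7 : 7 ≤ p) (hμ : 2 ≤ μ)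
    (hn : n = p ^ μ) (hn289 : 289 ≤ n)
    (ha : 6 ≤ a) (hab : a ≤ b) (hbc : b < c) (hc : 2 * c < n)
    (hcab : c = a + b - 2) (hs : 4 ≤ b / a)
    (hzs : n ∣ ∑ i, (![1, 1, c, n - b, n - a] : Fin 5 → ℕ) i)
    (hmin : ∀ s : Finset (Fin 5), s.Nonempty → s ≠ Finset.univ →
      ¬ n ∣ ∑ i ∈ s, (![1, 1, c, n - b, n - a] : Fin 5 → ℕ) i) :
    ∃ m : ℕ, Nat.gcd m n = 1 ∧
      lpr n m + lpr n m + lpr n (m * c) + lpr n (m * (n - b)) +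
        lpr n (m * (n - a)) = n :=
  stmt_6_general p μ n a b c hp hp7 hn hn289 ha hc hcab hs
end

section
/- Let n = p^μ be a prime power with p ≥ 7, μ ≥ 2, and n ≥ 289. Let a, b, c be integers with 6 ≤ a ≤ b < c < n/2, c = a + b − 2, and ⌊b/a⌋ ≤ 3, such that (1, 1, c, n−b, n−a) is a minimal zero-sum sequence over Z/n. Then there exists a unit m modulo n with |m|_n + |m|_n + |m·c|_n + |m·(n−b)|_n + |m·(n−a)|_n = n. -/
theorem lpr_of_not_dvd {n x : ℕ} (h : ¬ n ∣ x) : lpr n x = x % n :=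
  if_neg (mt Nat.dvd_of_mod_eq_zero h)

theorem lpr_mul_sub {n m x : ℕ} (hx : x ≤ n) (h : ¬ n ∣ m * x) :
    lpr n (m * (n - x)) = n - m * x % n := by
  have : NeZero n := ⟨by rintro rfl; simp_all⟩
  have hneg : ((m * (n - x) : ℕ) : ZMod n) = -((m * x : ℕ) : ZMod n) := by
    push_cast [Nat.cast_sub hx]
    simp
  have : NeZero ((m * x : ℕ) : ZMod n) := ⟨(ZMod.natCast_eq_zero_iff _ _).not.mpr h⟩
  have hd : ¬ n ∣ m * (n - x) := by
    rw [← ZMod.natCast_eq_zero_iff, hneg, neg_eq_zero, ZMod.natCast_eq_zero_iff]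
    exact h
  rw [lpr_of_not_dvd hd, ← ZMod.val_natCast, hneg, ZMod.val_neg_of_ne_zero, ZMod.val_natCast]

theorem not_dvd_mul_of_coprime {n m x : ℕ} (hm : m.Coprime n) (hx : 0 < x) (hxn : x < n) :
    ¬ n ∣ m * x := fun h =>
  absurd (Nat.le_of_dvd hx (hm.symm.dvd_of_dvd_mul_left h)) (by omega)

def IsGoodMultiplier (n a b m : ℕ) : Prop :=
  0 < m ∧ 2 * m < n ∧ n + 2 * m ≤ m * a % n + m * b % n

theorem lpr_sum_eq_of_isGoodMultiplier {n a b c m : ℕ} (hm : m.Coprime n)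
    (hgood : IsGoodMultiplier n a b m) (ha : 0 < a) (hb : 0 < b) (hc : 0 < c)
    (han : a < n) (hbn : b < n) (hcn : c < n) (habc : a + b = c + 2) :
    lpr n m + lpr n m + lpr n (m * c) + lpr n (m * (n - b)) + lpr n (m * (n - a)) = n := by
  obtain ⟨hm0, h2m, hwrap⟩ := hgood
  have hra := Nat.mod_lt (m * a) (by omega : 0 < n)
  have hrb := Nat.mod_lt (m * b) (by omega : 0 < n)
  have hmc : m * c % n + n + 2 * m = m * a % n + m * b % n := by
    have hmod : (m * c + 2 * m) % n = (m * a + m * b) % n := by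
      rw [← Nat.mul_add, habc]; ring_nf
    have hrc := Nat.mod_lt (m * c) (by omega : 0 < n)
    rw [Nat.add_mod, Nat.add_mod (m * a), Nat.mod_eq_of_lt h2m,
      Nat.mod_eq_sub_mod ((Nat.le_add_right n _).trans hwrap),
      Nat.mod_eq_of_lt (a := m * a % n + m * b % n - n) (by omega)] at hmod
    rcases Nat.lt_or_ge (m * c % n + 2 * m) n with hlt | hge
    · rw [Nat.mod_eq_of_lt hlt] at hmod
      omega
    · rw [Nat.mod_eq_sub_mod hge, Nat.mod_eq_of_lt (by omega)] at hmod
      omega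
  rw [lpr_of_not_dvd (not_dvd_mul_of_coprime hm hc hcn),
    lpr_mul_sub hbn.le (not_dvd_mul_of_coprime hm hb hbn),
    lpr_mul_sub han.le (not_dvd_mul_of_coprime hm ha han),
    lpr_of_not_dvd (fun h => absurd (Nat.le_of_dvd hm0 h) (by omega)),
    Nat.mod_eq_of_lt (by omega : m < n)]
  omega

theorem isGoodMultiplier_of_bounds {n a b c m : ℕ} (k : ℕ) (hma : m * a < n)
    (hkb : k * n ≤ m * b) (hbk : m * b < (k + 1) * n) (hkc : (k + 1) * n ≤ m * c)
    (habc : a + b = c + 2) : IsGoodMultiplier n a b m := by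
  have hmb : m * b % n + k * n = m * b := by
    rw [← Nat.div_eq_of_lt_le hkb hbk]
    exact Nat.mod_add_div' _ _
  have hsum : m * a + m * b = m * c + 2 * m := by rw [← Nat.mul_add, habc]; ring
  have hm : 0 < m := Nat.pos_of_ne_zero (by rintro rfl; nlinarith)
  refine ⟨hm, by nlinarith, ?_⟩
  rw [Nat.mod_eq_of_lt hma]
  nlinarith

theorem isGoodMultiplier_of_mul_le {n a b c m : ℕ} (hm : m.Coprime n) (hm1 : m ≠ 1)
    (hab : a ≤ b) (habc : a + b = c + 2) (hmb : m * b ≤ n) (hmc : n < m * c) :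
    IsGoodMultiplier n a b m := by
  have hmb' : m * b < n := hmb.lt_of_ne fun h => hm1 (hm.eq_one_of_dvd ⟨b, h.symm⟩)
  exact isGoodMultiplier_of_bounds 0 ((Nat.mul_le_mul_left m hab).trans_lt hmb')
    (by simp) (by simpa using hmb') (by simpa using hmc.le) habc

theorem lt_six_mul_of_mul_lt {a b c t j : ℕ} (habc : a + b = c + 2) (ha : 6 ≤ a)
    (hb : b < 4 * a) (h : c * t < (t + j) * b) : t < 6 * j := by
  nlinarith

theorem coprime_prime_pow_of_dvd_180 {p m : ℕ} (μ : ℕ) (hp : p.Prime) (hp7 : 7 ≤ p)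
    (hm : m ∣ 180) : m.Coprime (p ^ μ) := by
  refine Nat.Coprime.pow_right μ (Nat.Coprime.symm (hp.coprime_iff_not_dvd.mpr fun hpm => ?_))
  have h : p ∣ 2 ^ 2 * 3 ^ 2 * 5 ^ 1 := hpm.trans hm
  simp only [hp.dvd_mul] at h
  rcases h with (h | h) | h
  all_goals have := Nat.le_of_dvd (by norm_num) (hp.dvd_of_dvd_pow h); omega

theorem exists_good_multiplier_of_lt_succ_mul {n a b c t : ℕ} (hn : 289 ≤ n) (ha : 6 ≤ a)
    (hb : b < 4 * a) (habc : a + b = c + 2) (ht : 2 ≤ t) (hct : c * t ≤ n)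
    (hbt : n < (t + 1) * b) :
    ∃ m, m ∣ 180 ∧ IsGoodMultiplier n a b m := by
  have ht6 : t < 6 := by simpa using lt_six_mul_of_mul_lt habc ha hb (j := 1) (by omega)
  interval_cases t
  · rcases Nat.lt_or_ge (5 * b) (2 * n) with h | h
    · exact ⟨5, by norm_num, isGoodMultiplier_of_bounds 1 (by omega) (by omega)
        (by omega) (by omega) habc⟩
    · exact ⟨9, by norm_num, isGoodMultiplier_of_bounds 3 (by omega) (by omega)
        (by omega) (by omega) habc⟩
  · exact ⟨10, by norm_num, isGoodMultiplier_of_bounds 2 (by omega) (by omega)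
      (by omega) (by omega) habc⟩
  · exact ⟨9, by norm_num, isGoodMultiplier_of_bounds 1 (by omega) (by omega)
      (by omega) (by omega) habc⟩
  · omega

theorem exists_good_multiplier_of_dvd_succ {p μ n a b c t : ℕ} (hp : p.Prime) (hp7 : 7 ≤ p)
    (hn : n = p ^ μ) (hn289 : 289 ≤ n) (ha : 6 ≤ a) (hb : b < 4 * a) (habc : a + b = c + 2)
    (hct : c * t ≤ n) (hbt : n < (t + 2) * b) (hpt : p ∣ t + 1) :
    ∃ m, m ∣ 180 ∧ IsGoodMultiplier n a b m := by
  have ht : t < 12 := lt_six_mul_of_mul_lt habc ha hb (j := 2) (by omega)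
  have hp12 : p ≤ 12 := (Nat.le_of_dvd (by omega) hpt).trans (by omega)
  interval_cases p <;> norm_num at hp
  · obtain rfl : t = 6 := by omega
    exact ⟨20, by norm_num, isGoodMultiplier_of_bounds 2 (by omega) (by omega)
      (by omega) (by omega) habc⟩
  · -- here `n < 420`, which no power of 11 above 289 satisfies
    obtain rfl : t = 10 := by omega
    have : 11 ^ μ ≤ 11 ^ 2 ∨ 11 ^ 3 ≤ 11 ^ μ := by
      rcases Nat.lt_or_ge μ 3 with h | h
      · exact Or.inl (Nat.pow_le_pow_right (by norm_num) (by omega))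
      · exact Or.inr (Nat.pow_le_pow_right (by norm_num) h)
    omega

theorem exists_coprime_good_multiplier {p μ n a b c : ℕ} (hp : p.Prime) (hp7 : 7 ≤ p)
    (hn : n = p ^ μ) (hn289 : 289 ≤ n) (ha : 6 ≤ a) (hab : a ≤ b) (hb : b < 4 * a)
    (habc : a + b = c + 2) (hc : 2 * c < n) :
    ∃ m, m.Coprime n ∧ IsGoodMultiplier n a b m := by
  set t := n / c
  have hct : c * t ≤ n := Nat.mul_div_le n c
  have hct' : n < c * (t + 1) := Nat.lt_mul_div_succ n (by omega)
  have ht : 2 ≤ t := (Nat.le_div_iff_mul_le (by omega)).mpr (by omega)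
  have hcop : ∀ m, ¬ p ∣ m → m.Coprime n := fun m h =>
    hn ▸ (hp.coprime_iff_not_dvd.mpr h).symm.pow_right μ
  have hcop180 : ∀ m, m ∣ 180 → m.Coprime n := fun m h =>
    hn ▸ coprime_prime_pow_of_dvd_180 μ hp hp7 h
  have hgeneric : ∀ m, t + 1 ≤ m → m * b ≤ n → ¬ p ∣ m →
      ∃ m, m.Coprime n ∧ IsGoodMultiplier n a b m := fun m htm hmb hpm =>
    ⟨m, hcop m hpm, isGoodMultiplier_of_mul_le (hcop m hpm)
      (by omega) hab habc hmb (hct'.trans_le (by nlinarith))⟩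
  by_cases hbt : n < (t + 1) * b
  · obtain ⟨m, hm, hgood⟩ := exists_good_multiplier_of_lt_succ_mul hn289 ha hb habc ht hct hbt
    exact ⟨m, hcop180 m hm, hgood⟩
  by_cases hpt : p ∣ t + 1
  · by_cases hbt' : n < (t + 2) * b
    · obtain ⟨m, hm, hgood⟩ :=
        exists_good_multiplier_of_dvd_succ hp hp7 hn hn289 ha hb habc hct hbt' hpt
      exact ⟨m, hcop180 m hm, hgood⟩
    · refine hgeneric (t + 2) (by omega) (by omega) fun hpt2 => hp.one_lt.ne' ?_
      exact Nat.dvd_one.mp ((Nat.dvd_add_right hpt).mp hpt2)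
  · exact hgeneric (t + 1) le_rfl (by omega) hpt

theorem stmt_7_general (p μ n a b c : ℕ) (hp : p.Prime) (hp7 : 7 ≤ p)
    (hn : n = p ^ μ) (hn289 : 289 ≤ n)
    (ha : 6 ≤ a) (hab : a ≤ b) (hc : 2 * c < n)
    (hcab : c = a + b - 2) (hs : b / a ≤ 3) :
    ∃ m : ℕ, Nat.gcd m n = 1 ∧
      lpr n m + lpr n m + lpr n (m * c) + lpr n (m * (n - b)) +
        lpr n (m * (n - a)) = n := by
  have habc : a + b = c + 2 := by omega
  have hb : b < 4 * a := by
    have := (Nat.div_lt_iff_lt_mul (by omega : 0 < a)).mp (Nat.lt_succ_of_le hs)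
    omega
  obtain ⟨m, hm, hgood⟩ := exists_coprime_good_multiplier hp hp7 hn hn289 ha hab hb habc hc
  exact ⟨m, hm, lpr_sum_eq_of_isGoodMultiplier hm hgood (by omega) (by omega) (by omega)
    (by omega) (by omega) (by omega) habc⟩

theorem stmt_7 (p μ n a b c : ℕ) (hp : p.Prime) (hp7 : 7 ≤ p) (hμ : 2 ≤ μ)
    (hn : n = p ^ μ) (hn289 : 289 ≤ n)
    (ha : 6 ≤ a) (hab : a ≤ b) (hbc : b < c) (hc : 2 * c < n)
    (hcab : c = a + b - 2) (hs : b / a ≤ 3)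
    (hzs : n ∣ ∑ i, (![1, 1, c, n - b, n - a] : Fin 5 → ℕ) i)
    (hmin : ∀ s : Finset (Fin 5), s.Nonempty → s ≠ Finset.univ →
      ¬ n ∣ ∑ i ∈ s, (![1, 1, c, n - b, n - a] : Fin 5 → ℕ) i) :
    ∃ m : ℕ, Nat.gcd m n = 1 ∧
      lpr n m + lpr n m + lpr n (m * c) + lpr n (m * (n - b)) +
        lpr n (m * (n - a)) = n :=
  stmt_7_general p μ n a b c hp hp7 hn hn289 ha hab hc hcab hs
end

section
/- Let n = p^μ be a prime power with p ≥ 7, μ ≥ 2, and n ≥ 289. Let b, c be integers with c = b + 1, 3 < n/c < n/b < 4, such that (1, 1, c, n−b, n−3) is a minimal zero-sum sequence over Z/n. Then there exists a unit m modulo n with |m|_n + |m|_n + |m·c|_n + |m·(n−b)|_n + |m·(n−3)|_n = n. -/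
/-!
If `b/n < k/m < (b+1)/n` and `3m < n`, the least positive residues of `m`, `m(b+1)`, `m(n-b)`,
`m(n-3)` are `m`, `(b+1)m - kn`, `kn - bm` and `n - 3m`, which add up to `n` with `m` counted
twice. So it suffices to find such a fraction with `m < n/3` and `p ∤ m`. The interval lies in
`(1/4, 1/3)`; Stern–Brocot descent from the Farey pair `1/4, 1/3` yields Farey neighbours
`l/u, r/v` around it whose mediant lies inside, and `uv ≤ n` gives `4(u+v) ≤ n + 16`. If
`p ∣ u + v`, then `p` divides neither `u` nor `v`, and one of the first mediants
`(i(l+r)+l)/(i(u+v)+u)`, `(j(l+r)+r)/(j(u+v)+v)` inside the interval has denominator below `n/3`.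
-/

lemma lpr_of_lt {n x : ℕ} (hx : 0 < x) (hxn : x < n) : lpr n x = x := by
  rw [lpr, Nat.mod_eq_of_lt hxn, if_neg hx.ne']

lemma lpr_add_mul {n x : ℕ} (q : ℕ) (hx : 0 < x) (hxn : x < n) : lpr n (x + q * n) = x := by
  rw [lpr, Nat.add_mul_mod_self_right, ← lpr, lpr_of_lt hx hxn]

def IsDenomBetween (n b m : ℕ) : Prop := ∃ k, b * m < k * n ∧ k * n < (b + 1) * m

lemma lpr_sum_eq_of_isDenomBetween {n b m : ℕ} (hbn : b < n) (hm : 3 * m < n)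
    (h : IsDenomBetween n b m) :
    lpr n m + lpr n m + lpr n (m * (b + 1)) + lpr n (m * (n - b)) + lpr n (m * (n - 3)) = n := by
  obtain ⟨k, hlo, hhi⟩ := h
  obtain ⟨e, he⟩ : ∃ e, k * n = b * m + e := ⟨k * n - b * m, by omega⟩
  obtain ⟨f, hf⟩ : ∃ f, (b + 1) * m = k * n + f := ⟨(b + 1) * m - k * n, by omega⟩
  have hef : e + f = m := by linarith
  have hkm : k ≤ m := by
    have : k * n < m * n := hhi.trans_le (by rw [mul_comm]; gcongr; omega)
    exact (Nat.lt_of_mul_lt_mul_right this).le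
  have hmc : m * (b + 1) = f + k * n := by linarith
  have hmb : m * (n - b) = e + (m - k) * n := by
    zify [hbn.le, hkm] at he ⊢
    linear_combination he
  have hm3 : m * (n - 3) = (n - 3 * m) + (m - 1) * n := by
    zify [hm.le, (by omega : 3 ≤ n), (by omega : 1 ≤ m)]
    ring
  rw [hmc, hmb, hm3, lpr_add_mul _ (by omega) (by omega), lpr_add_mul _ (by omega) (by omega),
    lpr_add_mul _ (by omega) (by omega), lpr_of_lt (by omega) (by omega)]
  omega

lemma exists_lt_mul_le_add (a : ℕ) {e : ℕ} (he : 0 < e) :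
    ∃ i, a < i * e ∧ i * e ≤ a + e :=
  ⟨a / e + 1, by
    rw [add_one_mul]
    exact ⟨Nat.lt_div_mul_add he, Nat.add_le_add_right (Nat.div_mul_le_self a e) e⟩⟩

/-- Farey neighbours `l/u < r/v` with `l/u ≤ b/n` and `(b+1)/n ≤ r/v`; `s` and `t` are the
slacks of these two inequalities with denominators cleared. -/
structure FareyBracket (n b : ℕ) where
  l : ℕ
  u : ℕ
  r : ℕ
  v : ℕ
  s : ℕ
  t : ℕ
  det : r * u = l * v + 1
  left : b * u = l * n + s
  right : r * n = (b + 1) * v + t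

namespace FareyBracket

variable {n b : ℕ} (F : FareyBracket n b)

lemma u_pos : 0 < F.u := Nat.pos_of_ne_zero fun h => by simpa [h] using F.det

lemma coprime : Nat.Coprime F.u F.v := by
  have h : Nat.gcd F.u F.v ∣ F.l * F.v + 1 :=
    F.det ▸ dvd_mul_of_dvd_right (Nat.gcd_dvd_left _ _) _
  exact Nat.dvd_one.mp ((Nat.dvd_add_right (dvd_mul_of_dvd_right (Nat.gcd_dvd_right _ _) _)).mp h)

lemma eq_mul_add : n = F.u * F.v + F.u * F.t + F.v * F.s := by
  have := F.det; have := F.left; have := F.right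
  nlinarith

lemma isDenomBetween {α β : ℕ} (hs : α * F.s < β * (F.t + F.v))
    (ht : β * F.t < α * (F.s + F.u)) :
    IsDenomBetween n b (α * F.u + β * F.v) := by
  have := F.left; have := F.right
  refine ⟨α * F.l + β * F.r, ?_, ?_⟩ <;> nlinarith

lemma isDenomBetween_mediant (hs : F.s < F.t + F.v) (ht : F.t < F.s + F.u) :
    IsDenomBetween n b (F.u + F.v) := by
  simpa using F.isDenomBetween (α := 1) (β := 1) (by simpa) (by simpa)

/-- Stern–Brocot descent: an end is replaced by the mediant as long as the mediant is not
strictly inside `(b/n, (b+1)/n)`, and each step decreases `s + t`. -/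
theorem exists_mediant_between (hv : 0 < F.v) :
    ∃ G : FareyBracket n b, F.u ≤ G.u ∧ F.v ≤ G.v ∧ (G.v = F.v → G.r = F.r) ∧
      G.s < G.t + G.v ∧ G.t < G.s + G.u := by
  induction h : F.s + F.t using Nat.strong_induction_on generalizing F with
  | _ N ih =>
  by_cases hs : F.t + F.v ≤ F.s
  · obtain ⟨w, hw⟩ := Nat.exists_eq_add_of_le hs
    obtain ⟨H, hu, hv', hr, hH⟩ := ih (w + F.t) (by omega)
      ⟨F.l + F.r, F.u + F.v, F.r, F.v, w, F.t, by linarith [F.det], by linarith [F.left, F.right],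
        F.right⟩ hv rfl
    dsimp only at hu hv' hr
    exact ⟨H, by omega, hv', hr, hH⟩
  by_cases ht : F.s + F.u ≤ F.t
  · obtain ⟨w, hw⟩ := Nat.exists_eq_add_of_le ht
    have hu0 := F.u_pos
    obtain ⟨H, hu, hv', -, hH⟩ := ih (F.s + w) (by omega)
      ⟨F.l, F.u, F.l + F.r, F.u + F.v, F.s, w, by linarith [F.det], F.left,
        by linarith [F.left, F.right]⟩ (Nat.add_pos_left hu0 _) rfl
    dsimp only at hu hv'
    exact ⟨H, hu, by omega, by omega, hH⟩
  exact ⟨F, le_rfl, le_rfl, fun _ => rfl, by omega, by omega⟩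

lemma exists_isDenomBetween_not_dvd_of_dvd {d : ℕ} (hs : F.s < F.t + F.v) (ht : F.t < F.s + F.u)
    (hd : d ≠ 1) (hdvd : d ∣ F.u + F.v)
    (hsize : 6 * n + 3 * (F.u + F.v) ^ 2 < n * (F.u + F.v)) :
    ∃ m, ¬ d ∣ m ∧ 3 * m < n ∧ IsDenomBetween n b m := by
  obtain ⟨e, he⟩ := Nat.exists_eq_add_of_lt hs
  obtain ⟨f, hf⟩ := Nat.exists_eq_add_of_lt ht
  obtain ⟨i, hi, hie⟩ := exists_lt_mul_le_add F.s e.succ_pos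
  obtain ⟨j, hj, hjf⟩ := exists_lt_mul_le_add F.t f.succ_pos
  have hdu : ¬ d ∣ F.u := fun h =>
    hd (Nat.eq_one_of_dvd_coprimes F.coprime h ((Nat.dvd_add_right h).mp hdvd))
  have hdv : ¬ d ∣ F.v := fun h =>
    hd (Nat.eq_one_of_dvd_coprimes F.coprime ((Nat.dvd_add_left h).mp hdvd) h)
  have hleft : IsDenomBetween n b ((i + 1) * F.u + i * F.v) :=
    F.isDenomBetween (by nlinarith) (by nlinarith)
  have hright : IsDenomBetween n b (j * F.u + (j + 1) * F.v) :=
    F.isDenomBetween (by nlinarith) (by nlinarith)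
  have hleft_eq : (i + 1) * F.u + i * F.v = i * (F.u + F.v) + F.u := by ring
  have hright_eq : j * F.u + (j + 1) * F.v = j * (F.u + F.v) + F.v := by ring
  by_contra! hbig
  have h1 : n ≤ 3 * ((i + 1) * F.u + i * F.v) := not_lt.mp fun h => hbig _
    (by rw [hleft_eq, Nat.dvd_add_right (hdvd.mul_left i)]; exact hdu) h hleft
  have h2 : n ≤ 3 * (j * F.u + (j + 1) * F.v) := not_lt.mp fun h => hbig _
    (by rw [hright_eq, Nat.dvd_add_right (hdvd.mul_left j)]; exact hdv) h hright
  -- weighting `h1` by `e + 1`, `h2` by `f + 1` and adding gives `n(u+v) ≤ 6n + 3(u+v)²`,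
  -- because `(s + t)(u + v) + u(e + 1) + v(f + 1) = 2n`
  have := F.eq_mul_add
  nlinarith

lemma four_mul_add_le (hu : 4 ≤ F.u) (hv : 3 ≤ F.v) (hr : F.v = 3 → F.r = 1)
    (hn : 3 * b + 4 ≤ n) : 4 * (F.u + F.v) ≤ n + 16 := by
  have hn_eq := F.eq_mul_add
  rcases hv.eq_or_lt with hv3 | hv4
  · have hdet := F.det
    have hleft := F.left
    rw [hr hv3.symm, ← hv3] at hdet
    nlinarith
  · nlinarith

end FareyBracket

lemma six_mul_add_sq_lt_mul {n m : ℕ} (hm : 7 ≤ m) (hmn : 4 * m ≤ n + 16) (hn : 289 ≤ n) :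
    6 * n + 3 * m ^ 2 < n * m := by
  nlinarith

theorem exists_isDenomBetween_not_dvd {d n b : ℕ} (hd : 7 ≤ d) (hn : 289 ≤ n)
    (h3 : 3 * (b + 1) < n) (h4 : n < 4 * b) :
    ∃ m, ¬ d ∣ m ∧ 3 * m < n ∧ IsDenomBetween n b m := by
  let F : FareyBracket n b := ⟨1, 4, 1, 3, 4 * b - n, n - 3 * (b + 1), rfl, by omega, by omega⟩
  obtain ⟨G, hu, hv, hr, hs, ht⟩ := F.exists_mediant_between three_pos
  have hsize := G.four_mul_add_le hu hv hr (by omega)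
  by_cases hdvd : d ∣ G.u + G.v
  · exact G.exists_isDenomBetween_not_dvd_of_dvd hs ht (by omega) hdvd
      (six_mul_add_sq_lt_mul ((Nat.le_of_dvd (by omega) hdvd).trans' hd) hsize hn)
  · exact ⟨G.u + G.v, hdvd, by omega, G.isDenomBetween_mediant hs ht⟩

theorem stmt_16_general (p μ n b c : ℕ) (hp : p.Prime) (hp7 : 7 ≤ p)
    (hn : n = p ^ μ) (hn289 : 289 ≤ n)
    (hbc : c = b + 1) (h3c : 3 * c < n) (h4b : n < 4 * b) :
    ∃ m : ℕ, Nat.gcd m n = 1 ∧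
      lpr n m + lpr n m + lpr n (m * c) + lpr n (m * (n - b)) +
        lpr n (m * (n - 3)) = n := by
  subst hbc
  obtain ⟨m, hpm, hm, hbetween⟩ := exists_isDenomBetween_not_dvd hp7 hn289 h3c h4b
  refine ⟨m, ?_, lpr_sum_eq_of_isDenomBetween (by omega) hm hbetween⟩
  rw [hn]
  exact ((Nat.Prime.coprime_iff_not_dvd hp).mpr hpm).symm.pow_right μ

theorem stmt_16 (p μ n b c : ℕ) (hp : p.Prime) (hp7 : 7 ≤ p) (hμ : 2 ≤ μ)
    (hn : n = p ^ μ) (hn289 : 289 ≤ n)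
    (hbc : c = b + 1) (h3c : 3 * c < n) (h4b : n < 4 * b)
    (hzs : n ∣ ∑ i, (![1, 1, c, n - b, n - 3] : Fin 5 → ℕ) i)
    (hmin : ∀ s : Finset (Fin 5), s.Nonempty → s ≠ Finset.univ →
      ¬ n ∣ ∑ i ∈ s, (![1, 1, c, n - b, n - 3] : Fin 5 → ℕ) i) :
    ∃ m : ℕ, Nat.gcd m n = 1 ∧
      lpr n m + lpr n m + lpr n (m * c) + lpr n (m * (n - b)) +
        lpr n (m * (n - 3)) = n :=
  stmt_16_general p μ n b c hp hp7 hn hn289 hbc h3c h4b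
end
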